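/- arXiv:2507.16458 — 3 statements merged into one kernel-verified Lean document; each statement's English description precedes it below -/
import Mathlib

section
/- Consider the multi-agent system in which each agent i has scalar state x_i evolving as ẋ_i(t) = sat(Σ_{j∈N_i}(x_j(t) − x_i(t))), where sat is the linear saturation function with lower bound τ_l = 0. Then for every edge {i,j} of G one has x_i(t) − x_j(t) → 0 as t → ∞, and for every agent i the input u_i(t) = sat(Σ_{j∈N_i}(x_j(t) − x_i(t))) → 0 as t → ∞, for any initial condition x(0) ∈ ℝ^N. (Theorem 1.) -/
open Filter

/-- The linear saturation function with lower bound `τ_l = 0`,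
upper bound `τh > 0` and saturation level `r > 0`. -/
noncomputable def sat (τh r s : ℝ) : ℝ :=
  if s ≤ 0 then 0 else if s < r then τh / r * s else τh

lemma sat_eq_min {τh r : ℝ} (hτh : 0 < τh) (hr : 0 < r) (s : ℝ) :
    sat τh r s = min τh (τh / r * max s 0) := by
  unfold sat
  rcases le_or_gt s 0 with h | h
  · simp [h, max_eq_right h, hτh.le]
  · rw [if_neg (not_le.2 h), max_eq_left h.le]
    rcases lt_or_ge s r with h2 | h2
    · rw [if_pos h2, min_eq_right]
      calc τh / r * s ≤ τh / r * r := by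
            exact mul_le_mul_of_nonneg_left h2.le (by positivity)
        _ = τh := by field_simp
    · rw [if_neg (not_lt.2 h2), min_eq_left]
      calc τh = τh / r * r := by field_simp
        _ ≤ τh / r * s := mul_le_mul_of_nonneg_left h2 (by positivity)

lemma sat_continuous {τh r : ℝ} (hτh : 0 < τh) (hr : 0 < r) :
    Continuous (sat τh r) := by
  have : sat τh r = fun s => min τh (τh / r * max s 0) := funext (sat_eq_min hτh hr)
  rw [this]; fun_prop

lemma sat_nonneg {τh r : ℝ} (hτh : 0 < τh) (hr : 0 < r) (s : ℝ) : 0 ≤ sat τh r s := by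
  unfold sat
  split_ifs with h1 h2
  · exact le_refl 0
  · exact mul_nonneg (by positivity) (not_le.1 h1).le
  · exact hτh.le

lemma sat_pos {τh r : ℝ} (hτh : 0 < τh) (hr : 0 < r) {s : ℝ} (hs : 0 < s) :
    0 < sat τh r s := by
  unfold sat
  rw [if_neg (not_le.2 hs)]
  split_ifs with h2
  · exact mul_pos (by positivity) hs
  · exact hτh

lemma sat_of_nonpos {τh r : ℝ} {s : ℝ} (hs : s ≤ 0) : sat τh r s = 0 := if_pos hs

lemma sup_nonincreasing {ι : Type*} [Fintype ι] [Nonempty ι] {x : ℝ → ι → ℝ}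
    (hx : ∀ i, Continuous fun t => x t i)
    (hd : ∀ i t, 0 ≤ t → (∀ j, x t j ≤ x t i) → HasDerivAt (fun s => x s i) 0 t)
    {a b : ℝ} (ha : 0 ≤ a) :
    ∀ t ∈ Set.Icc a b, (Finset.univ.sup' Finset.univ_nonempty fun i => x t i)
      ≤ Finset.univ.sup' Finset.univ_nonempty fun i => x a i := by
  set M : ℝ → ℝ := fun t => Finset.univ.sup' Finset.univ_nonempty fun i => x t i with hM
  have hMc : Continuous M := by
    apply continuous_iff_continuousAt.2
    intro t
    exact ContinuousAt.finset_sup'_apply _ (fun i _ => (hx i).continuousAt)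
  have := image_le_of_liminf_slope_right_le_deriv_boundary (f := M) (a := a) (b := b)
    (B := fun _ => M a) (B' := fun _ => 0)
    hMc.continuousOn le_rfl continuousOn_const
    (fun s _ => hasDerivWithinAt_const s _ (M a)) ?_
  · exact fun t ht => this ht
  intro t ht r hr
  have h0t : 0 ≤ t := le_trans ha ht.1
  have key : ∀ i, ∀ᶠ z in nhdsWithin t (Set.Ioi t),
      (x t i = M t → slope (fun s => x s i) t z < r) ∧ (x t i < M t → x z i < M t) := by
    intro i
    rcases eq_or_lt_of_le (Finset.le_sup' (f := fun j => x t j) (Finset.mem_univ i)) with he | hlt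
    · have hDi : HasDerivAt (fun s => x s i) 0 t := by
        apply hd i t h0t
        intro j
        rw [he]
        exact Finset.le_sup' (f := fun j => x t j) (Finset.mem_univ j)
      have hsl : Tendsto (slope (fun s => x s i) t) (nhdsWithin t {t}ᶜ) (nhds 0) :=
        hasDerivAt_iff_tendsto_slope.mp hDi
      have ev1 : ∀ᶠ z in nhdsWithin t {t}ᶜ, slope (fun s => x s i) t z < r :=
        hsl.eventually_lt_const hr
      have ev1' : ∀ᶠ z in nhdsWithin t (Set.Ioi t), slope (fun s => x s i) t z < r :=
        ev1.filter_mono (nhdsWithin_mono t (fun z hz => (Set.mem_Ioi.1 hz).ne'))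
      filter_upwards [ev1'] with z hz
      exact ⟨fun _ => hz, fun hc => absurd he hc.ne⟩
    · have ev2 : ∀ᶠ z in nhds t, x z i < M t :=
        ((hx i).tendsto t).eventually_lt_const hlt
      filter_upwards [ev2.filter_mono nhdsWithin_le_nhds] with z hz
      exact ⟨fun hc => absurd hc hlt.ne, fun _ => hz⟩
  have hall : ∀ᶠ z in nhdsWithin t (Set.Ioi t), ∀ i,
      (x t i = M t → slope (fun s => x s i) t z < r) ∧ (x t i < M t → x z i < M t) :=
    eventually_all.2 key
  have hev : ∀ᶠ z in nhdsWithin t (Set.Ioi t), slope M t z < r := by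
    filter_upwards [hall, eventually_mem_nhdsWithin] with z hz hzt
    obtain ⟨k, -, hk⟩ := Finset.exists_mem_eq_sup' Finset.univ_nonempty (fun i => x z i)
    rcases eq_or_lt_of_le (Finset.le_sup' (f := fun j => x t j) (Finset.mem_univ k)) with he | hlt
    · have hsk : slope M t z = slope (fun s => x s k) t z := by
        rw [slope_def_field, slope_def_field]
        show (M z - M t) / (z - t) = (x z k - x t k) / (z - t)
        rw [← hk, he]
      rw [hsk]
      exact (hz k).1 he
    · have hzk : x z k < M t := (hz k).2 hlt
      have hMz : M z = x z k := hk
      have hr' : (0:ℝ) < r := hr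
      have : slope M t z < 0 := by
        rw [slope_def_field]
        show (M z - M t) / (z - t) < 0
        apply div_neg_of_neg_of_pos
        · rw [hMz]; linarith
        · exact sub_pos.2 (Set.mem_Ioi.1 hzt)
      linarith
  exact hev.frequently

/-- Theorem 1: for the multi-agent system `ẋ_i = sat(Σ_{j∈N_i}(x_j − x_i))` on a
connected acyclic (tree) graph `G`, the relative states along every edge converge
to zero and every control input converges to zero, from any initial condition. -/
theorem saturated_consensus (N : ℕ) (G : SimpleGraph (Fin N)) [DecidableRel G.Adj]
    (hconn : G.Connected) (hacyc : G.IsAcyclic)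
    (τh r : ℝ) (hτh : 0 < τh) (hr : 0 < r)
    (x : ℝ → Fin N → ℝ)
    (hx : ∀ i : Fin N, Differentiable ℝ (fun t => x t i))
    (hODE : ∀ i : Fin N, ∀ t : ℝ, 0 ≤ t →
      HasDerivAt (fun s => x s i)
        (sat τh r (∑ j ∈ G.neighborFinset i, (x t j - x t i))) t) :
    (∀ i j : Fin N, G.Adj i j →
      Tendsto (fun t => x t i - x t j) atTop (nhds 0)) ∧
    (∀ i : Fin N,
      Tendsto (fun t => sat τh r (∑ j ∈ G.neighborFinset i, (x t j - x t i)))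
        atTop (nhds 0)) := by
  classical
  haveI hNe : Nonempty (Fin N) := hconn.nonempty
  have hune : (Finset.univ : Finset (Fin N)).Nonempty := Finset.univ_nonempty
  have hxc : ∀ i, Continuous fun t => x t i := fun i => (hx i).continuous
  -- derivative at maximizers is zero
  have hd0 : ∀ i t, 0 ≤ t → (∀ j, x t j ≤ x t i) → HasDerivAt (fun s => x s i) 0 t := by
    intro i t ht hmax
    have h := hODE i t ht
    have hs : (∑ j ∈ G.neighborFinset i, (x t j - x t i)) ≤ 0 :=
      Finset.sum_nonpos fun j _ => sub_nonpos.2 (hmax j)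
    rwa [sat_of_nonpos hs] at h
  set M0 : ℝ := Finset.univ.sup' hune fun i => x 0 i with hM0
  have hbdd : ∀ i, ∀ t, 0 ≤ t → x t i ≤ M0 := by
    intro i t ht
    have h1 := sup_nonincreasing hxc hd0 (le_refl (0:ℝ)) t ⟨ht, le_refl t⟩
    exact le_trans (Finset.le_sup' (f := fun j => x t j) (Finset.mem_univ i)) h1
  -- monotone
  have hmono : ∀ i, MonotoneOn (fun t => x t i) (Set.Ici 0) := by
    intro i
    apply monotoneOn_of_deriv_nonneg (convex_Ici 0) (hxc i).continuousOn
      ((hx i).differentiableOn)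
    intro t ht
    rw [interior_Ici] at ht
    rw [(hODE i t (le_of_lt ht)).deriv]
    exact sat_nonneg hτh hr _
  -- limits exist
  have hlim : ∀ i, ∃ L, Tendsto (fun t => x t i) atTop (nhds L) := by
    intro i
    set y : ℝ → ℝ := fun t => x (max t 0) i with hy
    have hymono : Monotone y := fun t1 t2 h12 =>
      hmono i (Set.mem_Ici.2 (le_max_right t1 0)) (Set.mem_Ici.2 (le_max_right t2 0))
        (max_le_max h12 le_rfl)
    have hybdd : BddAbove (Set.range y) :=
      ⟨M0, by rintro _ ⟨t, rfl⟩; exact hbdd i _ (le_max_right t 0)⟩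
    refine ⟨⨆ t, y t, (tendsto_atTop_ciSup hymono hybdd).congr' ?_⟩
    filter_upwards [eventually_ge_atTop (0:ℝ)] with t ht
    rw [hy]; simp [max_eq_left ht]
  choose L hL using hlim
  -- limits of sums
  have hcL : ∀ i, Tendsto (fun t => ∑ j ∈ G.neighborFinset i, (x t j - x t i)) atTop
      (nhds (∑ j ∈ G.neighborFinset i, (L j - L i))) :=
    fun i => tendsto_finset_sum _ (fun j _ => (hL j).sub (hL i))
  have huL : ∀ i, Tendsto (fun t => sat τh r (∑ j ∈ G.neighborFinset i, (x t j - x t i)))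
      atTop (nhds (sat τh r (∑ j ∈ G.neighborFinset i, (L j - L i)))) :=
    fun i => (((sat_continuous hτh hr).tendsto _).comp (hcL i))
  -- limit Laplacian is superharmonic
  have hC0 : ∀ i, (∑ j ∈ G.neighborFinset i, (L j - L i)) ≤ 0 := by
    intro i
    by_contra hpos
    push_neg at hpos
    set d := sat τh r (∑ j ∈ G.neighborFinset i, (L j - L i)) with hd
    have hdpos : 0 < d := sat_pos hτh hr hpos
    have hev : ∀ᶠ t in atTop, d / 2 <
        sat τh r (∑ j ∈ G.neighborFinset i, (x t j - x t i)) :=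
      (huL i).eventually_const_lt (by linarith)
    obtain ⟨T0, hT0⟩ := eventually_atTop.1 hev
    set T := max T0 0 with hT
    have hder : ∀ t ∈ interior (Set.Ici T), d / 2 ≤ deriv (fun s => x s i) t := by
      intro t ht
      rw [interior_Ici] at ht
      have h1 : T0 ≤ t := le_of_lt (lt_of_le_of_lt (le_max_left _ _) ht)
      have h0 : 0 ≤ t := le_of_lt (lt_of_le_of_lt (le_max_right _ _) ht)
      rw [(hODE i t h0).deriv]
      exact le_of_lt (hT0 t h1)
    have hgrow := Convex.mul_sub_le_image_sub_of_le_deriv (convex_Ici T)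
      (hxc i).continuousOn (hx i).differentiableOn hder
    have hlin : Tendsto (fun t : ℝ => x T i + d / 2 * (t - T)) atTop atTop := by
      apply tendsto_atTop_add_const_left
      apply Tendsto.const_mul_atTop (by linarith : (0:ℝ) < d / 2)
      exact tendsto_atTop_add_const_right _ (-T) tendsto_id |>.congr
        (fun t => (sub_eq_add_neg t T).symm)
    have htop : Tendsto (fun t => x t i) atTop atTop := by
      apply tendsto_atTop_mono' atTop ?_ hlin
      filter_upwards [eventually_ge_atTop T] with t ht
      have := hgrow T Set.self_mem_Ici t ht ht
      linarith
    exact not_tendsto_atTop_of_tendsto_nhds (hL i) htop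
  have hsat0 : ∀ i, sat τh r (∑ j ∈ G.neighborFinset i, (L j - L i)) = 0 :=
    fun i => sat_of_nonpos (hC0 i)
  -- total sum is zero
  have hsumtot : ∑ i, (∑ j ∈ G.neighborFinset i, (L j - L i)) = 0 := by
    have hrw : ∀ i : Fin N, (∑ j ∈ G.neighborFinset i, (L j - L i))
        = ∑ j, (if G.Adj i j then L j - L i else 0) := by
      intro i
      rw [SimpleGraph.neighborFinset_eq_filter, Finset.sum_filter]
    have key : ∀ p q : Fin N,
        (if G.Adj p q then L q - L p else 0) = -(if G.Adj q p then L p - L q else 0) := by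
      intro p q
      by_cases h : G.Adj p q
      · rw [if_pos h, if_pos h.symm]; ring
      · rw [if_neg h, if_neg (fun h' => h h'.symm)]; ring
    have hA : (∑ i, ∑ j, (if G.Adj i j then L j - L i else 0))
        = -(∑ i, ∑ j, (if G.Adj i j then L j - L i else 0)) := by
      conv_lhs => rw [Finset.sum_comm]
      calc ∑ j : Fin N, ∑ i : Fin N, (if G.Adj i j then L j - L i else 0)
          = ∑ j : Fin N, ∑ i : Fin N, -(if G.Adj j i then L i - L j else 0) :=
            Finset.sum_congr rfl fun j _ => Finset.sum_congr rfl fun i _ => key i j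
        _ = -(∑ i, ∑ j, (if G.Adj i j then L j - L i else 0)) := by
            simp [Finset.sum_neg_distrib]
    calc ∑ i, (∑ j ∈ G.neighborFinset i, (L j - L i))
        = ∑ i, ∑ j, (if G.Adj i j then L j - L i else 0) :=
          Finset.sum_congr rfl fun i _ => hrw i
      _ = 0 := by linarith [hA]
  have hceq0 : ∀ i, (∑ j ∈ G.neighborFinset i, (L j - L i)) = 0 := by
    have h := (Finset.sum_eq_zero_iff_of_nonpos (fun i _ => hC0 i)).1 hsumtot
    exact fun i => h i (Finset.mem_univ i)
  -- L is constant
  set m := Finset.univ.sup' hune L with hm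
  have hstep : ∀ i j, G.Adj i j → L i = m → L j = m := by
    intro i j hadj hi
    have hnonpos : ∀ k ∈ G.neighborFinset i, L k - L i ≤ 0 := by
      intro k _
      have hk : L k ≤ m := Finset.le_sup' L (Finset.mem_univ k)
      have : L k ≤ L i := le_of_le_of_eq hk hi.symm
      linarith
    have hterms := (Finset.sum_eq_zero_iff_of_nonpos hnonpos).1 (hceq0 i) j
      ((SimpleGraph.mem_neighborFinset G i j).2 hadj)
    have hk : L j ≤ m := Finset.le_sup' L (Finset.mem_univ j)
    linarith
  have hallm : ∀ j, L j = m := by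
    obtain ⟨i0, -, hi0⟩ := Finset.exists_mem_eq_sup' hune L
    have walkprop : ∀ {u v : Fin N}, G.Walk u v → L u = m → L v = m := by
      intro u v w
      induction w with
      | nil => exact id
      | cons h p ih => exact fun hu => ih (hstep _ _ h hu)
    intro j
    obtain ⟨w⟩ := hconn.preconnected i0 j
    exact walkprop w hi0.symm
  refine ⟨?_, ?_⟩
  · intro i j hadj
    have h := (hL i).sub (hL j)
    rwa [hallm i, hallm j, sub_self] at h
  · intro i
    have h := huL i
    rwa [hsat0 i] at h
end

section
/- Let η : [0,∞) → ℝ^N be differentiable and satisfy η̇(t) = −L·sat(η(t)), where sat is applied componentwise and L is the Laplacian matrix of G. With 𝑠̄𝑎𝑡(s̄) := sat(s̄ + r/2) − τ_h/2 and V(η) := Σ_{i=1}^N ∫₀^{η_i − r/2} 𝑠̄𝑎𝑡(s̄) ds̄, the function t ↦ V(η(t)) is differentiable with derivative d/dt V(η(t)) = −sat(η(t))ᵀ L sat(η(t)) ≤ 0 for all t ≥ 0. -/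
open Matrix

theorem sat_eq_mul_max_min {τh r : ℝ} (hr : 0 < r) (s : ℝ) :
    sat τh r s = τh / r * max 0 (min s r) := by
  unfold sat
  split_ifs with hs₀ hsr
  · rw [min_eq_left (hs₀.trans hr.le), max_eq_left hs₀, mul_zero]
  · rw [min_eq_left hsr.le, max_eq_right (not_le.mp hs₀).le]
  · rw [min_eq_right (not_lt.mp hsr), max_eq_right hr.le, div_mul_cancel₀ τh hr.ne']

theorem continuous_sat {τh r : ℝ} (hr : 0 < r) : Continuous (sat τh r) := by
  simp_rw [funext (sat_eq_mul_max_min hr)]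
  fun_prop

theorem SimpleGraph.const_dotProduct_lapMatrix_mulVec {V R : Type*} [Fintype V] [DecidableEq V]
    [CommRing R] (G : SimpleGraph V) [DecidableRel G.Adj] (c : R) (x : V → R) :
    (fun _ => c) ⬝ᵥ (G.lapMatrix R *ᵥ x) = 0 := by
  rw [dotProduct_mulVec, ← (G.isSymm_lapMatrix (R := R)).eq, vecMul_transpose,
    show (fun _ => c) = c • fun _ : V => (1 : R) by ext; simp, mulVec_smul,
    lapMatrix_mulVec_const_eq_zero, smul_zero, zero_dotProduct]

theorem lyapunov_derivative_nonpos_general (N : ℕ) (G : SimpleGraph (Fin N))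
    [DecidableRel G.Adj]
    (τh r : ℝ) (hr : 0 < r)
    (η : ℝ → Fin N → ℝ)
    (hODE : ∀ i : Fin N, ∀ t : ℝ, 0 ≤ t →
      HasDerivAt (fun s => η s i)
        (-(G.lapMatrix ℝ *ᵥ fun j => sat τh r (η t j)) i) t) :
    ∀ t : ℝ, 0 ≤ t →
      HasDerivAt
        (fun s => ∑ i : Fin N,
          ∫ u in (0:ℝ)..(η s i - r / 2), (sat τh r (u + r / 2) - τh / 2))
        (-((fun j => sat τh r (η t j)) ⬝ᵥ (G.lapMatrix ℝ *ᵥ fun j => sat τh r (η t j)))) t ∧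
      -((fun j => sat τh r (η t j)) ⬝ᵥ (G.lapMatrix ℝ *ᵥ fun j => sat τh r (η t j))) ≤ 0 := by
  intro t ht
  set x : Fin N → ℝ := fun j => sat τh r (η t j)
  have hsat_shift : Continuous fun u => sat τh r (u + r / 2) - τh / 2 := by
    have := continuous_sat (τh := τh) hr
    fun_prop
  have hV : HasDerivAt
      (fun s => ∑ i, ∫ u in (0:ℝ)..(η s i - r / 2), (sat τh r (u + r / 2) - τh / 2))
      ((x - fun _ => τh / 2) ⬝ᵥ -(G.lapMatrix ℝ *ᵥ x)) t :=
    HasDerivAt.fun_sum fun i _ => by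
      have := (hsat_shift.integral_hasStrictDerivAt 0 _).hasDerivAt.comp t
        ((hODE i t ht).sub_const (r / 2))
      rwa [sub_add_cancel] at this
  refine ⟨hV.congr_deriv ?_, neg_nonpos.2 ?_⟩
  · rw [dotProduct_neg, sub_dotProduct, G.const_dotProduct_lapMatrix_mulVec, sub_zero]
  · simpa using (G.posSemidef_lapMatrix ℝ).dotProduct_mulVec_nonneg x

/-- For `η̇ = −L·sat(η)` with `L` the graph Laplacian, the Lyapunov function
`V(η) = Σ_i ∫₀^{η_i − r/2} (sat(s + r/2) − τh/2) ds` is differentiable along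
solutions, with derivative `−sat(η)ᵀ L sat(η) ≤ 0`. -/
theorem lyapunov_derivative_nonpos (N : ℕ) (G : SimpleGraph (Fin N))
    [DecidableRel G.Adj]
    (τh r : ℝ) (hτh : 0 < τh) (hr : 0 < r)
    (η : ℝ → Fin N → ℝ)
    (hODE : ∀ i : Fin N, ∀ t : ℝ, 0 ≤ t →
      HasDerivAt (fun s => η s i)
        (-(G.lapMatrix ℝ *ᵥ fun j => sat τh r (η t j)) i) t) :
    ∀ t : ℝ, 0 ≤ t →
      HasDerivAt
        (fun s => ∑ i : Fin N,
          ∫ u in (0:ℝ)..(η s i - r / 2), (sat τh r (u + r / 2) - τh / 2))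
        (-((fun j => sat τh r (η t j)) ⬝ᵥ (G.lapMatrix ℝ *ᵥ fun j => sat τh r (η t j)))) t ∧
      -((fun j => sat τh r (η t j)) ⬝ᵥ (G.lapMatrix ℝ *ᵥ fun j => sat τh r (η t j))) ≤ 0 :=
  lyapunov_derivative_nonpos_general N G τh r hr η hODE
end

section
/- Let v > 0, w > 0 and T = 2π/w. The function F(A) := (1/T)·∫₀^T √(v² − A² w² cos²(w t)) dt is continuous and strictly decreasing on [0, v/w], with F(0) = v and F(v/w) = 2v/π; consequently F is a bijection from [0, v/w] onto [2v/π, v], so every desired average parametric velocity in [2v/π, v] is realized by a unique oscillation amplitude A ∈ [0, v/w]. -/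
/-!
At the critical amplitude `A = v / w` the integrand collapses to `v |sin (w t)|`, whose mean over
a period is `2 v / π`. For `A ≤ v / w` the integrand is pointwise antitone in `A`, and strictly
so at `t = 0` where `cos (w t) = 1`; hence the mean is strictly decreasing and continuous, and the
intermediate value theorem gives the bijection.
-/

open Real Set intervalIntegral

lemma ContinuousOn.bijOn_Icc_of_strictAntiOn {α δ : Type*} [ConditionallyCompleteLinearOrder α]
    [TopologicalSpace α] [OrderTopology α] [DenselyOrdered α] [LinearOrder δ] [TopologicalSpace δ]
    [OrderClosedTopology δ] {f : α → δ} {a b : α} (hab : a ≤ b)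
    (hf : ContinuousOn f (Icc a b)) (hf' : StrictAntiOn f (Icc a b)) :
    BijOn f (Icc a b) (Icc (f b) (f a)) := by
  simpa only [hf.image_Icc_of_antitoneOn hab hf'.antitoneOn] using hf'.injOn.bijOn_image

lemma integral_abs_sin_zero_pi : ∫ x in (0:ℝ)..π, |sin x| = 2 := by
  rw [integral_congr fun x hx => abs_of_nonneg <|
    sin_nonneg_of_nonneg_of_le_pi (uIcc_of_le pi_pos.le ▸ hx).1 (uIcc_of_le pi_pos.le ▸ hx).2]
  norm_num [integral_sin]

lemma integral_abs_sin_zero_two_pi : ∫ x in (0:ℝ)..2 * π, |sin x| = 4 := by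
  have hper : Function.Periodic (fun x => |sin x|) π := fun x => by simp [sin_add_pi]
  have := hper.intervalIntegral_add_zsmul_eq 2 0
    fun a b => (continuous_abs.comp continuous_sin).intervalIntegrable a b
  norm_num [integral_abs_sin_zero_pi] at this
  linarith

lemma integral_abs_sin_mul_zero_two_pi_div {w : ℝ} (hw : w ≠ 0) :
    ∫ t in (0:ℝ)..2 * π / w, |sin (w * t)| = 4 / w := by
  rw [integral_comp_mul_left (fun x => |sin x|) hw, mul_zero, mul_div_cancel₀ _ hw,
    integral_abs_sin_zero_two_pi, smul_eq_mul, div_eq_inv_mul]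

/-- `∫₀ᵀ ẋ dt`, the distance covered along the straight path in time `T`. -/
noncomputable def alongTrackDistance (v w T A : ℝ) : ℝ :=
  ∫ t in (0:ℝ)..T, √(v ^ 2 - A ^ 2 * w ^ 2 * cos (w * t) ^ 2)

section

variable {v w T : ℝ}

lemma continuous_alongTrackDistance : Continuous (alongTrackDistance v w T) :=
  continuous_parametric_intervalIntegral_of_continuous' (by fun_prop) 0 T

lemma alongTrackDistance_zero (hv : 0 ≤ v) : alongTrackDistance v w T 0 = T * v := by
  simp [alongTrackDistance, sqrt_sq hv]

lemma alongTrackDistance_two_pi_div_div (hv : 0 ≤ v) (hw : w ≠ 0) :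
    alongTrackDistance v w (2 * π / w) (v / w) = 4 * v / w := by
  have hsin : ∀ t, v ^ 2 - (v / w) ^ 2 * w ^ 2 * cos (w * t) ^ 2 = (v * sin (w * t)) ^ 2 := by
    intro t
    rw [div_pow, div_mul_cancel₀ _ (pow_ne_zero 2 hw)]
    linear_combination (-v ^ 2) * sin_sq_add_cos_sq (w * t)
  simp_rw [alongTrackDistance, hsin, sqrt_sq_eq_abs, abs_mul, abs_of_nonneg hv,
    integral_const_mul, integral_abs_sin_mul_zero_two_pi_div hw]
  ring

lemma strictAntiOn_alongTrackDistance (hw : 0 < w) (hT : 0 < T) :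
    StrictAntiOn (alongTrackDistance v w T) (Icc 0 (v / w)) := by
  intro a ha b hb hab
  have hsq : a ^ 2 < b ^ 2 := pow_lt_pow_left₀ hab ha.1 two_ne_zero
  have hbw : b ^ 2 * w ^ 2 ≤ v ^ 2 := by
    rw [← mul_pow]
    exact pow_le_pow_left₀ (mul_nonneg hb.1 hw.le) ((le_div_iff₀ hw).1 hb.2) 2
  refine integral_lt_integral_of_continuousOn_of_le_of_exists_lt hT
    (by fun_prop) (by fun_prop) (fun t _ => sqrt_le_sqrt ?_) ⟨0, ⟨le_rfl, hT.le⟩, ?_⟩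
  · have : 0 ≤ w ^ 2 * cos (w * t) ^ 2 := by positivity
    nlinarith
  · simp only [mul_zero, cos_zero, one_pow, mul_one]
    exact sqrt_lt_sqrt (by linarith) (by nlinarith [pow_pos hw 2])

end

/-- The average parametric velocity
`F(A) = (1/T)∫₀^T √(v² − A²w² cos²(wt)) dt` is continuous and strictly
decreasing on `[0, v/w]`, with `F(0) = v` and `F(v/w) = 2v/π`; consequently it
is a bijection from `[0, v/w]` onto `[2v/π, v]`. -/
theorem average_parametric_velocity_bijective (v w T : ℝ)
    (hv : 0 < v) (hw : 0 < w) (hT : T = 2 * Real.pi / w)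
    (F : ℝ → ℝ)
    (hF : ∀ A : ℝ, F A = (1 / T) * ∫ t in (0:ℝ)..T,
        Real.sqrt (v ^ 2 - A ^ 2 * w ^ 2 * Real.cos (w * t) ^ 2)) :
    ContinuousOn F (Set.Icc 0 (v / w)) ∧
    StrictAntiOn F (Set.Icc 0 (v / w)) ∧
    F 0 = v ∧
    F (v / w) = 2 * v / Real.pi ∧
    Set.BijOn F (Set.Icc 0 (v / w)) (Set.Icc (2 * v / Real.pi) v) := by
  have hT0 : 0 < T := hT ▸ by positivity
  have hF : ∀ A, F A = T⁻¹ * alongTrackDistance v w T A := fun A => by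
    rw [hF, one_div, alongTrackDistance]
  have hcont : ContinuousOn F (Icc 0 (v / w)) :=
    (continuous_const.mul continuous_alongTrackDistance).continuousOn.congr fun A _ => hF A
  have hanti : StrictAntiOn F (Icc 0 (v / w)) := fun a ha b hb hab => by
    rw [hF, hF]
    exact mul_lt_mul_of_pos_left (strictAntiOn_alongTrackDistance hw hT0 ha hb hab)
      (inv_pos.2 hT0)
  have hF0 : F 0 = v := by
    rw [hF, alongTrackDistance_zero hv.le, inv_mul_cancel_left₀ hT0.ne']
  have hF1 : F (v / w) = 2 * v / π := by
    rw [hF, hT, alongTrackDistance_two_pi_div_div hv.le hw.ne']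
    field_simp
    ring
  refine ⟨hcont, hanti, hF0, hF1, ?_⟩
  simpa only [hF0, hF1] using hcont.bijOn_Icc_of_strictAntiOn (by positivity) hanti
end
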